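/- Fix 0 < k < 1 and T > 0, let α_k(t) = 1 + k t, and let Q̂ = {(x,t) ∈ ℝ² : 0 < t < T, 0 < x < α_k(t)}. Let u : ℝ² → ℝ be of class C² and satisfy ∂²u/∂t² = ∂²u/∂x² on Q̂ together with u(0,t) = 0 and u(α_k(t), t) = 0 for all t ∈ [0,T]. Define the energy E(t) = (1/2) ∫₀^{α_k(t)} ( (∂u/∂t(x,t))² + (∂u/∂x(x,t))² ) dx. Then E is differentiable on (0,T) with E'(t) = (k/2)(k² − 1) (∂u/∂x(α_k(t), t))² for every t ∈ (0,T); in particular, since 0 < k < 1, E is non-increasing on (0,T). -/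

import Mathlib

/-!
Differentiating `E(t) = ½ ∫₀^{α(t)} (u_t² + u_x²) dx` gives a boundary term `½ α' (u_t² + u_x²)` at
`x = α(t)` plus `½ ∫₀^{α(t)} ∂_t (u_t² + u_x²) dx`. By the wave equation and `u_xt = u_tx`,
`∂_t (u_t² + u_x²) = ∂_x (2 u_t u_x)`, so the integral is the flux `u_t u_x` evaluated at the ends.
Differentiating the Dirichlet conditions along the boundary curves gives `u_t = 0` at `x = 0` and
`u_t = -k u_x` at `x = 1 + k t`, so `E' = ½ (k (k² + 1) u_x² - 2 k u_x²) = (k/2)(k² - 1) u_x²`.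
-/

open Function Set Filter Topology ContinuousLinearMap

namespace MovingWave

noncomputable def partialX (u : ℝ → ℝ → ℝ) (x t : ℝ) : ℝ := deriv (fun y => u y t) x

noncomputable def partialT (u : ℝ → ℝ → ℝ) (x t : ℝ) : ℝ := deriv (u x) t

section Partials

variable {u : ℝ → ℝ → ℝ} {x t : ℝ}

theorem partialX_eq_fderiv (hu : DifferentiableAt ℝ (uncurry u) (x, t)) :
    partialX u x t = fderiv ℝ (uncurry u) (x, t) (1, 0) :=
  (hu.hasFDerivAt.comp_hasDerivAt (f := fun y => (y, t)) x
    ((hasDerivAt_id' x).prodMk (hasDerivAt_const x t))).deriv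

theorem partialT_eq_fderiv (hu : DifferentiableAt ℝ (uncurry u) (x, t)) :
    partialT u x t = fderiv ℝ (uncurry u) (x, t) (0, 1) :=
  (hu.hasFDerivAt.comp_hasDerivAt (f := fun s => (x, s)) t
    ((hasDerivAt_const t x).prodMk (hasDerivAt_id' t))).deriv

theorem hasDerivAt_partialX (hu : DifferentiableAt ℝ (uncurry u) (x, t)) :
    HasDerivAt (fun y => u y t) (partialX u x t) x :=
  (hu.comp (f := fun y => (y, t)) x
    (differentiableAt_fun_id.prodMk (differentiableAt_const t))).hasDerivAt

theorem hasDerivAt_partialT (hu : DifferentiableAt ℝ (uncurry u) (x, t)) :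
    HasDerivAt (u x) (partialT u x t) t :=
  (hu.comp (f := fun s => (x, s)) t
    ((differentiableAt_const x).prodMk differentiableAt_fun_id)).hasDerivAt

theorem uncurry_partialX_eq_fderiv (hu : Differentiable ℝ (uncurry u)) :
    uncurry (partialX u) = fun p => fderiv ℝ (uncurry u) p (1, 0) :=
  funext fun _ => partialX_eq_fderiv (hu _)

theorem uncurry_partialT_eq_fderiv (hu : Differentiable ℝ (uncurry u)) :
    uncurry (partialT u) = fun p => fderiv ℝ (uncurry u) p (0, 1) :=
  funext fun _ => partialT_eq_fderiv (hu _)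

variable {n : WithTop ℕ∞}

theorem contDiff_partialX (hu : ContDiff ℝ (n + 1) (uncurry u)) :
    ContDiff ℝ n (uncurry (partialX u)) := by
  rw [uncurry_partialX_eq_fderiv (hu.differentiable (by simp))]
  exact (hu.fderiv_right le_rfl).clm_apply contDiff_const

theorem contDiff_partialT (hu : ContDiff ℝ (n + 1) (uncurry u)) :
    ContDiff ℝ n (uncurry (partialT u)) := by
  rw [uncurry_partialT_eq_fderiv (hu.differentiable (by simp))]
  exact (hu.fderiv_right le_rfl).clm_apply contDiff_const

theorem partialT_partialX (hu : ContDiff ℝ 2 (uncurry u)) :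
    partialT (partialX u) = partialX (partialT u) := by
  have hdd : Differentiable ℝ (fderiv ℝ (uncurry u)) :=
    (hu.fderiv_right (m := 1) le_rfl).differentiable one_ne_zero
  have h1 : Differentiable ℝ (uncurry u) := hu.differentiable (by simp)
  ext x t
  rw [partialT_eq_fderiv ((contDiff_partialX (n := 1) hu).differentiable one_ne_zero (x, t)),
    partialX_eq_fderiv ((contDiff_partialT (n := 1) hu).differentiable one_ne_zero (x, t)),
    uncurry_partialX_eq_fderiv h1, uncurry_partialT_eq_fderiv h1,
    fderiv_clm_apply (hdd _) (differentiableAt_const _),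
    fderiv_clm_apply (hdd _) (differentiableAt_const _)]
  simpa using (hu.contDiffAt.isSymmSndFDerivAt (by simp)) (0, 1) (1, 0)

theorem hasDerivAt_comp_curve {α : ℝ → ℝ} {α' : ℝ}
    (hu : DifferentiableAt ℝ (uncurry u) (α t, t)) (hα : HasDerivAt α α' t) :
    HasDerivAt (fun s => u (α s) s) (α' * partialX u (α t) t + partialT u (α t) t) t := by
  have h := hu.hasFDerivAt.comp_hasDerivAt (f := fun s => (α s, s)) t
    (hα.prodMk (hasDerivAt_id' t))
  have hdir : ((α', 1) : ℝ × ℝ) = α' • ((1 : ℝ), (0 : ℝ)) + ((0 : ℝ), (1 : ℝ)) := by simp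
  rwa [hdir, map_add, map_smul, ← partialX_eq_fderiv hu, ← partialT_eq_fderiv hu] at h

end Partials

section Leibniz

variable {g gₜ : ℝ → ℝ → ℝ}

theorem hasDerivAt_intervalIntegral_param (hg : ∀ t, Continuous (g · t))
    (hgₜ : Continuous (uncurry gₜ)) (hd : ∀ x t, HasDerivAt (g x) (gₜ x t) t) (a b t₀ : ℝ) :
    HasDerivAt (fun t => ∫ x in a..b, g x t) (∫ x in a..b, gₜ x t₀) t₀ := by
  obtain ⟨C, hC⟩ := (isCompact_uIcc.prod (isCompact_closedBall t₀ 1)).exists_bound_of_continuousOn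
    hgₜ.continuousOn
  refine (intervalIntegral.hasDerivAt_integral_of_dominated_loc_of_deriv_le (bound := fun _ => C)
    (Metric.closedBall_mem_nhds t₀ one_pos) (.of_forall fun t => (hg t).aestronglyMeasurable)
    ((hg t₀).intervalIntegrable a b)
    (hgₜ.comp (continuous_id.prodMk continuous_const)).aestronglyMeasurable
    (.of_forall fun x hx t ht => hC (x, t) ⟨uIoc_subset_uIcc hx, ht⟩)
    intervalIntegrable_const (.of_forall fun x _ t _ => hd x t)).2

theorem hasFDerivAt_intervalIntegral_upper_param (hg : Continuous (uncurry g))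
    (hgₜ : Continuous (uncurry gₜ)) (hd : ∀ x t, HasDerivAt (g x) (gₜ x t) t) (a : ℝ)
    (p : ℝ × ℝ) :
    HasFDerivAt (fun q : ℝ × ℝ => ∫ x in a..q.1, g x q.2)
      ((toSpanSingleton ℝ (g p.1 p.2)).coprod
        (toSpanSingleton ℝ (∫ x in a..p.1, gₜ x p.2))) p := by
  have hslice : ∀ t, Continuous (g · t) := fun t => hg.comp (continuous_id.prodMk continuous_const)
  have hprim : Continuous fun q : ℝ × ℝ => ∫ x in a..q.1, gₜ x q.2 :=
    (intervalIntegral.continuous_parametric_primitive_of_continuous (f := fun t x => gₜ x t)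
      (hgₜ.comp continuous_swap)).comp continuous_swap
  refine (hasStrictFDerivAt_uncurry_coprod (f := fun s t => ∫ x in a..s, g x t)
    (f₁ := fun s t => toSpanSingleton ℝ (g s t))
    (f₂ := fun s t => toSpanSingleton ℝ (∫ x in a..s, gₜ x t))
    (.of_forall fun q => ((hslice q.2).integral_hasStrictDerivAt a q.1).hasDerivAt.hasFDerivAt)
    (.of_forall fun q => (hasDerivAt_intervalIntegral_param hslice hgₜ hd a q.1 q.2).hasFDerivAt)
    (toSpanSingletonCLE.continuous.comp hg).continuousAt
    (toSpanSingletonCLE.continuous.comp hprim).continuousAt).hasFDerivAt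

theorem hasDerivAt_intervalIntegral_moving_upper (hg : Continuous (uncurry g))
    (hgₜ : Continuous (uncurry gₜ)) (hd : ∀ x t, HasDerivAt (g x) (gₜ x t) t) {α : ℝ → ℝ}
    {α' t₀ : ℝ} (hα : HasDerivAt α α' t₀) (a : ℝ) :
    HasDerivAt (fun t => ∫ x in a..α t, g x t)
      (α' * g (α t₀) t₀ + ∫ x in a..α t₀, gₜ x t₀) t₀ := by
  simpa [comp_def] using
    (hasFDerivAt_intervalIntegral_upper_param hg hgₜ hd a (α t₀, t₀)).comp_hasDerivAt
      (f := fun s => (α s, s)) t₀ (hα.prodMk (hasDerivAt_id' t₀))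

end Leibniz

noncomputable def energyDensity (u : ℝ → ℝ → ℝ) (x t : ℝ) : ℝ :=
  partialT u x t ^ 2 + partialX u x t ^ 2

section Energy

variable {u : ℝ → ℝ → ℝ} {x t : ℝ}

theorem contDiff_energyDensity (hu : ContDiff ℝ 2 (uncurry u)) :
    ContDiff ℝ 1 (uncurry (energyDensity u)) :=
  ((contDiff_partialT hu).pow 2).add ((contDiff_partialX hu).pow 2)

theorem partialT_energyDensity (hu : ContDiff ℝ 2 (uncurry u)) :
    partialT (energyDensity u) x t = 2 * partialT u x t * partialT (partialT u) x t
      + 2 * partialX u x t * partialT (partialX u) x t := by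
  have hut :=
    hasDerivAt_partialT ((contDiff_partialT (n := 1) hu).differentiable one_ne_zero (x, t))
  have hux :=
    hasDerivAt_partialT ((contDiff_partialX (n := 1) hu).differentiable one_ne_zero (x, t))
  exact (((hut.pow 2).add (hux.pow 2)).congr_deriv (by ring)).deriv

theorem hasDerivAt_energyFlux (hu : ContDiff ℝ 2 (uncurry u))
    (hwave : partialT (partialT u) x t = partialX (partialX u) x t) :
    HasDerivAt (fun y => 2 * partialT u y t * partialX u y t)
      (partialT (energyDensity u) x t) x := by
  have hut :=
    hasDerivAt_partialX ((contDiff_partialT (n := 1) hu).differentiable one_ne_zero (x, t))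
  have hux :=
    hasDerivAt_partialX ((contDiff_partialX (n := 1) hu).differentiable one_ne_zero (x, t))
  refine ((hut.const_mul 2).mul hux).congr_deriv ?_
  rw [partialT_energyDensity hu, hwave, partialT_partialX hu]
  ring

theorem integral_partialT_energyDensity (hu : ContDiff ℝ 2 (uncurry u)) {a b : ℝ} (hab : a ≤ b)
    (hwave : ∀ x ∈ Ioo a b, partialT (partialT u) x t = partialX (partialX u) x t) :
    ∫ x in a..b, partialT (energyDensity u) x t
      = 2 * partialT u b t * partialX u b t - 2 * partialT u a t * partialX u a t := by
  have hslice : Continuous fun y : ℝ => (y, t) := continuous_id.prodMk continuous_const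
  refine intervalIntegral.integral_eq_sub_of_hasDerivAt_of_le hab ?_
    (fun x hx => hasDerivAt_energyFlux hu (hwave x hx)) ?_
  · exact (((continuous_const.mul ((contDiff_partialT (n := 1) hu).continuous.comp hslice)).mul
      ((contDiff_partialX (n := 1) hu).continuous.comp hslice))).continuousOn
  · exact ((contDiff_partialT (n := 0) (contDiff_energyDensity hu)).continuous.comp
      hslice).intervalIntegrable _ _

theorem hasDerivAt_integral_energyDensity (hu : ContDiff ℝ 2 (uncurry u)) {α : ℝ → ℝ}
    {α' : ℝ} (hα : HasDerivAt α α' t) (a : ℝ) :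
    HasDerivAt (fun s => ∫ x in a..α s, energyDensity u x s)
      (α' * energyDensity u (α t) t + ∫ x in a..α t, partialT (energyDensity u) x t) t :=
  have he := contDiff_energyDensity hu
  hasDerivAt_intervalIntegral_moving_upper he.continuous
    (contDiff_partialT (n := 0) he).continuous
    (fun x s => hasDerivAt_partialT (he.differentiable one_ne_zero (x, s))) hα a

theorem mul_partialX_add_partialT_eq_zero {α : ℝ → ℝ} {k : ℝ}
    (hu : DifferentiableAt ℝ (uncurry u) (α t, t)) (hα : HasDerivAt α k t)
    (hzero : ∀ᶠ s in 𝓝 t, u (α s) s = 0) :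
    k * partialX u (α t) t + partialT u (α t) t = 0 :=
  (hasDerivAt_comp_curve hu hα).unique ((hasDerivAt_const t 0).congr_of_eventuallyEq hzero)

end Energy

end MovingWave

theorem antitoneOn_Ioo_of_hasDerivAt_nonpos {f f' : ℝ → ℝ} {a b : ℝ}
    (hf : ∀ t ∈ Ioo a b, HasDerivAt f (f' t) t) (hf' : ∀ t ∈ Ioo a b, f' t ≤ 0) :
    AntitoneOn f (Ioo a b) :=
  antitoneOn_of_hasDerivWithinAt_nonpos (convex_Ioo a b)
    (fun t ht => (hf t ht).continuousAt.continuousWithinAt)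
    (by simpa using fun t ht => (hf t ht).hasDerivWithinAt) (by simpa using hf')

open MovingWave

theorem wave_moving_boundary_energy_identity_general
    (k T : ℝ) (hk0 : 0 < k) (hk1 : k < 1)
    (u : ℝ → ℝ → ℝ)
    (hreg : ContDiff ℝ 2 (fun p : ℝ × ℝ => u p.1 p.2))
    (hwave : ∀ x t : ℝ, 0 < t → t < T → 0 < x → x < 1 + k * t →
      deriv (fun s => deriv (fun s' => u x s') s) t
        = deriv (fun y => deriv (fun y' => u y' t) y) x)
    (hdir0 : ∀ t ∈ Set.Icc (0 : ℝ) T, u 0 t = 0)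
    (hdir1 : ∀ t ∈ Set.Icc (0 : ℝ) T, u (1 + k * t) t = 0)
    (E : ℝ → ℝ)
    (hE : ∀ t : ℝ, E t = (1 / 2) *
      ∫ x in (0 : ℝ)..(1 + k * t),
        (deriv (fun s => u x s) t) ^ 2 + (deriv (fun y => u y t) x) ^ 2) :
    (∀ t ∈ Set.Ioo (0 : ℝ) T,
        HasDerivAt E ((k / 2) * (k ^ 2 - 1) * (deriv (fun y => u y t) (1 + k * t)) ^ 2) t) ∧
      AntitoneOn E (Set.Ioo (0 : ℝ) T) := by
  have hu : Differentiable ℝ (uncurry u) := hreg.differentiable (by simp)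
  have hE' : E = fun t => 1 / 2 * ∫ x in (0 : ℝ)..1 + k * t, energyDensity u x t := funext hE
  have hderiv : ∀ t ∈ Ioo 0 T,
      HasDerivAt E ((k / 2) * (k ^ 2 - 1) * partialX u (1 + k * t) t ^ 2) t := by
    rintro t ⟨ht0, htT⟩
    have hα : HasDerivAt (fun s => 1 + k * s) k t := by
      simpa using ((hasDerivAt_id t).const_mul k).const_add 1
    have hnear : ∀ᶠ s in 𝓝 t, s ∈ Icc 0 T :=
      mem_of_superset (Ioo_mem_nhds ht0 htT) Ioo_subset_Icc_self
    have hV0 : partialT u 0 t = 0 := by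
      simpa using mul_partialX_add_partialT_eq_zero (hu _) (hasDerivAt_const t 0)
        (hnear.mono hdir0)
    have hVa : partialT u (1 + k * t) t = -(k * partialX u (1 + k * t) t) :=
      eq_neg_of_add_eq_zero_right (mul_partialX_add_partialT_eq_zero (hu _) hα
        (hnear.mono hdir1))
    have hflux := integral_partialT_energyDensity hreg (by positivity)
      fun x hx => hwave x t ht0 htT hx.1 hx.2
    rw [hE']
    refine ((hasDerivAt_integral_energyDensity hreg hα 0).const_mul (1 / 2)).congr_deriv ?_
    rw [hflux, energyDensity, hVa, hV0]
    ring
  refine ⟨hderiv, antitoneOn_Ioo_of_hasDerivAt_nonpos hderiv fun t _ => ?_⟩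
  exact mul_nonpos_of_nonpos_of_nonneg
    (mul_nonpos_of_nonneg_of_nonpos (by positivity) (by nlinarith)) (sq_nonneg _)

/-- energy identity for the wave equation on the moving domain
`Q̂ = {(x,t) : 0 < t < T, 0 < x < 1 + k t}`, `0 < k < 1`: the energy
`E(t) = (1/2) ∫₀^{1+kt} (u_t² + u_x²) dx` is differentiable on `(0,T)` with
`E'(t) = (k/2)(k² − 1) u_x(1+kt, t)²`, hence non-increasing on `(0,T)`.
Here `u x t` denotes `u(x, t)`. -/
theorem wave_moving_boundary_energy_identity
    (k T : ℝ) (hk0 : 0 < k) (hk1 : k < 1) (hT0 : 0 < T)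
    (u : ℝ → ℝ → ℝ)
    (hreg : ContDiff ℝ 2 (fun p : ℝ × ℝ => u p.1 p.2))
    (hwave : ∀ x t : ℝ, 0 < t → t < T → 0 < x → x < 1 + k * t →
      deriv (fun s => deriv (fun s' => u x s') s) t
        = deriv (fun y => deriv (fun y' => u y' t) y) x)
    (hdir0 : ∀ t ∈ Set.Icc (0 : ℝ) T, u 0 t = 0)
    (hdir1 : ∀ t ∈ Set.Icc (0 : ℝ) T, u (1 + k * t) t = 0)
    (E : ℝ → ℝ)
    (hE : ∀ t : ℝ, E t = (1 / 2) *
      ∫ x in (0 : ℝ)..(1 + k * t),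
        (deriv (fun s => u x s) t) ^ 2 + (deriv (fun y => u y t) x) ^ 2) :
    (∀ t ∈ Set.Ioo (0 : ℝ) T,
        HasDerivAt E ((k / 2) * (k ^ 2 - 1) * (deriv (fun y => u y t) (1 + k * t)) ^ 2) t) ∧
      AntitoneOn E (Set.Ioo (0 : ℝ) T) :=
  wave_moving_boundary_energy_identity_general k T hk0 hk1 u hreg hwave hdir0 hdir1 E hE
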